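/- Let {C(t), t ≥ 0} be a family of nonempty closed convex subsets of H converging in the Mosco sense to a nonempty closed convex set C_∞, i.e.: (a) for every sequence t_n → +∞ and every sequence c_n ∈ C(t_n) converging weakly to some c ∈ H, one has c ∈ C_∞; and (b) every z ∈ C_∞ is the strong limit of points z(t) ∈ C(t). Assume additionally that for every z ∈ C_∞ there exists a selection z(·) with z(t) ∈ C(t) for all t, z(t) → z strongly, and ∫₀^{+∞} ‖z(t) − z‖² dt < +∞. Let x(·) be a strong global solution of the sweeping process ẋ(t) + N_{C(t)}(x(t)) ∋ 0 (so x(t) ∈ C(t) and −ẋ(t) ∈ N_{C(t)}(x(t)) for a.e. t) having finite energy, ∫₀^{+∞} ‖ẋ(t)‖² dt < +∞. Then there exists x_∞ ∈ C_∞ such that x(t) converges weakly to x_∞ in H as t → +∞. -/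

import Mathlib

open MeasureTheory Set Filter Topology ENNReal RealInnerProductSpace

variable {H : Type*} [NormedAddCommGroup H] [InnerProductSpace ℝ H] [CompleteSpace H]

/-- A multivalued operator `M : H ⇉ H`, identified with its graph, is monotone. -/
def MonotoneGraph (M : Set (H × H)) : Prop :=
  ∀ p ∈ M, ∀ q ∈ M, (0:ℝ) ≤ ⟪p.1 - q.1, p.2 - q.2⟫

/-- Maximal monotone operator: the graph is not strictly contained in a monotone graph. -/
def MaximalMonotoneGraph (M : Set (H × H)) : Prop :=
  MonotoneGraph M ∧ ∀ N : Set (H × H), MonotoneGraph N → M ⊆ N → N = M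

/-- The Brézis–Haraux function `G_M(x,u) = sup_{(y,v) ∈ gph M} ⟨x−y, v−u⟩`. -/
noncomputable def BH (M : Set (H × H)) (x u : H) : EReal :=
  ⨆ q ∈ M, ((⟪x - q.1, q.2 - u⟫ : ℝ) : EReal)

/-- Value of an extended real in `ℝ≥0∞` (used to express `∫ < +∞` for nonnegative quantities). -/
noncomputable def ennval (x : EReal) : ℝ≥0∞ :=
  if x = ⊤ then ⊤ else ENNReal.ofReal x.toReal

/-- `x` is locally absolutely continuous on `[0,∞)` with derivative `x'`. -/
def LocAC (x x' : ℝ → H) : Prop :=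
  (∀ T : ℝ, IntegrableOn x' (Icc 0 T)) ∧
    ∀ t : ℝ, 0 ≤ t → x t = x 0 + ∫ s in (0:ℝ)..t, x' s

/-- Weak convergence in average of the trajectory `x` to `xlim`. -/
def WeakAvgConv (x : ℝ → H) (xlim : H) : Prop :=
  ∀ y : H, Tendsto (fun t : ℝ => (⟪t⁻¹ • ∫ s in (0:ℝ)..t, x s, y⟫ : ℝ))
    atTop (𝓝 (⟪xlim, y⟫ : ℝ))

/-- Weak convergence of `x(t)` to `xlim` as `t → +∞`. -/
def WeakConv (x : ℝ → H) (xlim : H) : Prop :=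
  ∀ y : H, Tendsto (fun t : ℝ => (⟪x t, y⟫ : ℝ)) atTop (𝓝 (⟪xlim, y⟫ : ℝ))

/-- Convexity for `ℝ ∪ {+∞}`-valued (here `EReal`-valued) functions. -/
def EConvex {E : Type*} [AddCommGroup E] [Module ℝ E] (f : E → EReal) : Prop :=
  ∀ x y : E, ∀ a b : ℝ, 0 ≤ a → 0 ≤ b → a + b = 1 →
    f (a • x + b • y) ≤ (a : EReal) * f x + (b : EReal) * f y

/-- Subdifferential of an extended-real-valued convex function. -/
def ESubdiff (f : H → EReal) (x : H) : Set H :=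
  {p : H | ∀ y : H, f x + ((⟪p, y - x⟫ : ℝ) : EReal) ≤ f y}

/-- Graph of the subdifferential operator. -/
def ESubdiffGraph (f : H → EReal) : Set (H × H) :=
  {q : H × H | q.2 ∈ ESubdiff f q.1}

/-- Graph of the sum of two operators. -/
def GraphSum (A B : Set (H × H)) : Set (H × H) :=
  {q : H × H | ∃ u v : H, (q.1, u) ∈ A ∧ (q.1, v) ∈ B ∧ q.2 = u + v}

/-- Graph of `A + c • B`. -/
def ScaledSum (A B : Set (H × H)) (c : ℝ) : Set (H × H) :=
  {q : H × H | ∃ u v : H, (q.1, u) ∈ A ∧ (q.1, v) ∈ B ∧ q.2 = u + c • v}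

/-- Graph of `c • A`. -/
def SmulGraph (c : ℝ) (A : Set (H × H)) : Set (H × H) :=
  {q : H × H | ∃ u : H, (q.1, u) ∈ A ∧ q.2 = c • u}

/-- Domain of an operator given by its graph. -/
def GraphDom (A : Set (H × H)) : Set H := {x : H | ∃ u : H, (x, u) ∈ A}

/-- Graph of the normal cone operator of a set `C`. -/
def NormalConeGraph (C : Set H) : Set (H × H) :=
  {q : H × H | q.1 ∈ C ∧ ∀ y ∈ C, (⟪q.2, y - q.1⟫ : ℝ) ≤ 0}

/-- Lower semicontinuous hull of an extended-real-valued function. -/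
noncomputable def lscHull {E : Type*} [TopologicalSpace E] (f : E → EReal) : E → EReal :=
  fun x => Filter.liminf f (𝓝 x)

/-- Inf-compactness: bounded sublevel sets are relatively compact. -/
def InfCompact (f : H → EReal) : Prop :=
  ∀ R : ℝ, 0 < R → ∀ l : ℝ, IsCompact (closure {x : H | ‖x‖ ≤ R ∧ f x ≤ (l : EReal)})

/-- Set of global minimizers of `f`. -/
def ArgMin (f : H → EReal) : Set H := {x : H | ∀ y : H, f x ≤ f y}

/-- Set of minimizers of `f` over the set `C`. -/
def ArgMinOn (f : H → EReal) (C : Set H) : Set H := {x ∈ C | ∀ y ∈ C, f x ≤ f y}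

/-- Fenchel conjugate of an extended-real-valued function. -/
noncomputable def FConj (f : H → EReal) (p : H) : EReal :=
  ⨆ x : H, (((⟪p, x⟫ : ℝ) : EReal) - f x)

/-- Support function of a set `C`. -/
noncomputable def SuppFn (C : Set H) (p : H) : EReal :=
  ⨆ x : C, ((⟪p, (x : H)⟫ : ℝ) : EReal)

/-!
For `z ∈ C∞` let `ζ` be its square-integrable selection. Testing the normal-cone inclusion with
`ζ(t) ∈ C(t)` gives, for a.e. `t`,
`d/dt ‖x(t) - z‖² = 2⟪x(t) - z, ẋ(t)⟫ ≤ ‖ẋ(t)‖² + ‖ζ(t) - z‖²`,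
an integrable bound, so `‖x(t) - z‖²` decreases up to a vanishing tail and has a limit. Every
weak cluster point of `x` at infinity lies in `C∞` by Mosco condition (a), and Opial's argument
concludes: two cluster points `c, c'` would satisfy `lim ‖x - c'‖² = lim ‖x - c‖² + ‖c - c'‖²`
and the symmetric identity, forcing `c = c'`.
-/

theorem AbsolutelyContinuousOnInterval.of_dist_le_mul {X Y : Type*} [PseudoMetricSpace X]
    [PseudoMetricSpace Y] {f : ℝ → X} {g : ℝ → Y} {a b K : ℝ}
    (hg : AbsolutelyContinuousOnInterval g a b)
    (hfg : ∀ u ∈ uIcc a b, ∀ v ∈ uIcc a b, dist (f u) (f v) ≤ K * dist (g u) (g v)) :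
    AbsolutelyContinuousOnInterval f a b := by
  unfold AbsolutelyContinuousOnInterval at hg ⊢
  refine squeeze_zero' (Eventually.of_forall fun _ ↦ Finset.sum_nonneg fun _ _ ↦ dist_nonneg)
    ?_ (by simpa using hg.const_mul K)
  rw [eventually_inf_principal]
  filter_upwards with E hE
  rw [Finset.mul_sum]
  exact Finset.sum_le_sum fun i hi ↦ hfg _ (hE.1 i hi).1 _ (hE.1 i hi).2

theorem lintegral_Ici_eq_lintegral_Ico_add {f : ℝ → ℝ≥0∞} {a s : ℝ} (has : a ≤ s) :
    ∫⁻ r in Ici a, f r = (∫⁻ r in Ico a s, f r) + ∫⁻ r in Ici s, f r := by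
  rw [← lintegral_add_measure, ← Measure.restrict_union
    ((Iio_disjoint_Ici le_rfl).mono_left Ico_subset_Iio_self) measurableSet_Ici,
    Ico_union_Ici_eq_Ici has]

/-- `f` need not be measurable (the selections `ζ` are arbitrary functions), so the tails of `f`
are compared with those of a measurable minorant with the same integral. -/
theorem tendsto_lintegral_Ici_atTop_zero {f : ℝ → ℝ≥0∞} {a : ℝ}
    (hf : ∫⁻ r in Ici a, f r ≠ ∞) :
    Tendsto (fun s ↦ ∫⁻ r in Ici s, f r) atTop (𝓝 0) := by
  obtain ⟨g, hgm, hgf, hfg⟩ := exists_measurable_le_lintegral_eq (volume.restrict (Ici a)) f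
  have htail : ∀ s, a ≤ s → ∫⁻ r in Ici s, f r ≤ ∫⁻ r in Ici s, g r := by
    intro s has
    have hhead : ∫⁻ r in Ico a s, g r ≠ ∞ :=
      ne_top_of_le_ne_top hf (hfg ▸ lintegral_Ici_eq_lintegral_Ico_add (f := g) has ▸ le_self_add)
    refine (ENNReal.add_le_add_iff_left hhead).1 ?_
    calc (∫⁻ r in Ico a s, g r) + ∫⁻ r in Ici s, f r
        ≤ (∫⁻ r in Ico a s, f r) + ∫⁻ r in Ici s, f r := by gcongr; exact hgf _
      _ = (∫⁻ r in Ico a s, g r) + ∫⁻ r in Ici s, g r := by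
        rw [← lintegral_Ici_eq_lintegral_Ico_add has, hfg, lintegral_Ici_eq_lintegral_Ico_add has]
  have hg : Tendsto (fun s ↦ ∫⁻ r, (Ici s).indicator g r ∂volume.restrict (Ici a)) atTop
      (𝓝 (∫⁻ _, 0 ∂volume.restrict (Ici a))) := by
    refine tendsto_lintegral_filter_of_dominated_convergence g
      (Eventually.of_forall fun s ↦ hgm.indicator measurableSet_Ici)
      (Eventually.of_forall fun s ↦ Eventually.of_forall (indicator_le_self _ _))
      (hfg ▸ hf) (Eventually.of_forall fun r ↦ tendsto_const_nhds.congr' ?_)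
    filter_upwards [eventually_gt_atTop r] with s hs
    simp [hs]
  rw [lintegral_zero] at hg
  refine tendsto_of_tendsto_of_tendsto_of_le_of_le' tendsto_const_nhds hg
    (Eventually.of_forall fun _ ↦ zero_le) ?_
  filter_upwards [eventually_ge_atTop a] with s has
  rw [lintegral_indicator measurableSet_Ici, Measure.restrict_restrict measurableSet_Ici,
    Ici_inter_Ici, sup_eq_left.2 has]
  exact htail s has

theorem integral_le_toReal_lintegral_ofReal {α : Type*} [MeasurableSpace α] {μ : Measure α}
    (f : α → ℝ) : ∫ a, f a ∂μ ≤ (∫⁻ a, ENNReal.ofReal (f a) ∂μ).toReal := by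
  by_cases hf : Integrable f μ
  · rw [integral_eq_lintegral_pos_part_sub_lintegral_neg_part hf]
    exact sub_le_self _ toReal_nonneg
  · rw [integral_undef hf]
    exact toReal_nonneg

theorem exists_tendsto_of_le_add {f τ : ℝ → ℝ} (hf : ∀ t, 0 ≤ f t)
    (hτ : Tendsto τ atTop (𝓝 0)) (hle : ∀ s t, 0 ≤ s → s ≤ t → f t ≤ f s + τ s) :
    ∃ L, Tendsto f atTop (𝓝 L) := by
  have hbdd : IsBoundedUnder (· ≤ ·) atTop f :=
    ⟨f 0 + τ 0, eventually_map.2 <| by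
      filter_upwards [eventually_ge_atTop 0] with t ht using hle 0 t le_rfl ht⟩
  have hbdd' : IsBoundedUnder (· ≥ ·) atTop f := ⟨0, eventually_map.2 (.of_forall hf)⟩
  refine ⟨liminf f atTop, tendsto_of_le_liminf_of_limsup_le le_rfl ?_ hbdd hbdd'⟩
  refine le_of_forall_pos_le_add fun ε hε ↦ ?_
  have hlimsup : ∀ᶠ s in atTop, limsup f atTop ≤ f s + ε := by
    filter_upwards [hτ.eventually (gt_mem_nhds hε), eventually_ge_atTop 0] with s hτs hs
    refine limsup_le_of_le hbdd'.isCoboundedUnder_le ?_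
    filter_upwards [eventually_ge_atTop s] with t hst
    linarith [hle s t hs hst]
  have : limsup f atTop - ε ≤ liminf f atTop :=
    le_liminf_of_le hbdd.isCoboundedUnder_ge (hlimsup.mono fun s hs ↦ by linarith)
  linarith

theorem exists_ge_mem_dist_lt_of_ae_mem {X : Type*} [PseudoMetricSpace X] {x : ℝ → X}
    {C : ℝ → Set X}
    (hmem : ∀ᵐ t ∂volume.restrict (Ioi 0), x t ∈ C t) {τ : ℝ} (hτ : 0 ≤ τ)
    (hx : ContinuousWithinAt x (Ici 0) τ) {ε : ℝ} (hε : 0 < ε) :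
    ∃ s, τ ≤ s ∧ x s ∈ C s ∧ dist (x s) (x τ) < ε := by
  obtain ⟨δ, hδ, hclose⟩ := Metric.continuousWithinAt_iff.1 hx ε hε
  have hae : ∀ᵐ s ∂volume.restrict (Ioo τ (τ + δ)), s ∈ Ioo τ (τ + δ) ∧ x s ∈ C s :=
    (ae_restrict_mem measurableSet_Ioo).and (ae_restrict_of_ae_restrict_of_subset
      (fun s hs ↦ lt_of_le_of_lt hτ hs.1) hmem)
  have : (ae (volume.restrict (Ioo τ (τ + δ)))).NeBot := by
    rw [ae_restrict_neBot, Real.volume_Ioo]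
    simpa using hδ
  obtain ⟨s, ⟨hτs, hsδ⟩, hs⟩ := hae.exists
  refine ⟨s, hτs.le, hs, hclose (hτ.trans hτs.le) ?_⟩
  rw [Real.dist_eq, abs_of_pos (sub_pos.2 hτs)]
  linarith

section InnerProduct

open TopologicalSpace InnerProductSpace

variable {E : Type*} [NormedAddCommGroup E] [InnerProductSpace ℝ E]

theorem two_inner_sub_le_of_inner_neg_le {v p y z : E} (h : ⟪-v, y - p⟫ ≤ 0) :
    2 * ⟪p - z, v⟫ ≤ ‖v‖ ^ 2 + ‖y - z‖ ^ 2 := by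
  have hsplit : ⟪p - z, v⟫ = ⟪y - z, v⟫ - ⟪y - p, v⟫ := by
    rw [← inner_sub_left, _root_.sub_sub_sub_cancel_left]
  rw [inner_neg_left, real_inner_comm] at h
  nlinarith [real_inner_le_norm (y - z) v, sq_nonneg (‖v‖ - ‖y - z‖)]

def WeaklyTendsto (u : ℕ → E) (c : E) : Prop :=
  ∀ y : E, Tendsto (fun n ↦ ⟪u n, y⟫) atTop (𝓝 ⟪c, y⟫)

theorem WeaklyTendsto.of_tendsto_dist {u v : ℕ → E} {c : E} (hu : WeaklyTendsto u c)
    (huv : Tendsto (fun n ↦ dist (v n) (u n)) atTop (𝓝 0)) : WeaklyTendsto v c := by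
  intro y
  have hdiff : Tendsto (fun n ↦ ⟪v n - u n, y⟫) atTop (𝓝 0) := by
    refine squeeze_zero_norm (fun n ↦ norm_inner_le_norm _ _) ?_
    simpa [dist_eq_norm] using huv.mul_const ‖y‖
  simpa [inner_sub_left] using (hu y).add hdiff

theorem WeaklyTendsto.tendsto_sq_norm_sub {u : ℕ → E} {c : E} (hu : WeaklyTendsto u c) {L : ℝ}
    (hL : Tendsto (fun n ↦ ‖u n - c‖ ^ 2) atTop (𝓝 L)) (z : E) :
    Tendsto (fun n ↦ ‖u n - z‖ ^ 2) atTop (𝓝 (L + ‖c - z‖ ^ 2)) := by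
  have hcross : Tendsto (fun n ↦ ⟪u n - c, c - z⟫) atTop (𝓝 0) := by
    simpa only [inner_sub_left, sub_self] using (hu (c - z)).sub_const ⟪c, c - z⟫
  have hsum := (hL.add (hcross.const_mul 2)).add_const (‖c - z‖ ^ 2)
  rw [mul_zero, add_zero] at hsum
  refine hsum.congr fun n ↦ ?_
  rw [← sub_add_sub_cancel (u n) c z, norm_add_sq_real]

theorem exists_weaklyTendsto_subseq [CompleteSpace E] {u : ℕ → E} {M : ℝ}
    (hu : ∀ n, ‖u n‖ ≤ M) : ∃ c, ∃ σ : ℕ → ℕ, StrictMono σ ∧ WeaklyTendsto (u ∘ σ) c := by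
  set K := (Submodule.span ℝ (range u)).topologicalClosure
  have hmem : ∀ n, u n ∈ K :=
    fun n ↦ Submodule.le_topologicalClosure _ (Submodule.subset_span (mem_range_self n))
  have : CompleteSpace K := (Submodule.isClosed_topologicalClosure _).completeSpace_coe
  have : SeparableSpace K :=
    ((countable_range u).isSeparable.span (R := ℝ)).closure.separableSpace
  set v : ℕ → WeakDual ℝ K := fun n ↦ StrongDual.toWeakDual (toDual ℝ K ⟨u n, hmem n⟩)
  have hv : ∀ n, v n ∈ WeakDual.toStrongDual ⁻¹' Metric.closedBall 0 M := by
    intro n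
    exact mem_closedBall_zero_iff.2 (((toDual ℝ K).norm_map _).trans_le (hu n))
  obtain ⟨φ, -, σ, hσ, hlim⟩ := WeakDual.isSeqCompact_closedBall (𝕜 := ℝ) (E := K) 0 M hv
  refine ⟨((toDual ℝ K).symm (WeakDual.toStrongDual φ) : E), σ, hσ, fun y ↦ ?_⟩
  have hK := ((WeakDual.eval_continuous (K.orthogonalProjectionOnto y)).tendsto φ).comp hlim
  have hφ : φ (K.orthogonalProjectionOnto y) =
      ⟪((toDual ℝ K).symm (WeakDual.toStrongDual φ) : E), y⟫ := by
    rw [← Submodule.inner_orthogonalProjectionOnto_eq_of_mem_left, toDual_symm_apply]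
    rfl
  rw [← hφ]
  refine hK.congr fun n ↦ ?_
  simp [v]

/-- Opial's lemma. -/
theorem exists_weakConv_of_tendsto_sq_norm_sub [CompleteSpace E] {x : ℝ → E} {S : Set E}
    (hS : S.Nonempty) (hlim : ∀ z ∈ S, ∃ L, Tendsto (fun t ↦ ‖x t - z‖ ^ 2) atTop (𝓝 L))
    (hclu : ∀ (t : ℕ → ℝ) (c : E), Tendsto t atTop atTop → WeaklyTendsto (x ∘ t) c → c ∈ S) :
    ∃ c ∈ S, WeakConv x c := by
  obtain ⟨z₀, hz₀⟩ := hS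
  obtain ⟨L₀, hL₀⟩ := hlim z₀ hz₀
  have hcluster : ∀ t : ℕ → ℝ, Tendsto t atTop atTop →
      ∃ c ∈ S, ∃ σ : ℕ → ℕ, StrictMono σ ∧ WeaklyTendsto (x ∘ t ∘ σ) c := by
    intro t ht
    obtain ⟨B, hB⟩ := (hL₀.comp ht).bddAbove_range
    obtain ⟨c, σ, hσ, hc⟩ := exists_weaklyTendsto_subseq (u := x ∘ t) (M := B + 1 + ‖z₀‖)
      fun n ↦ by
        show ‖x (t n)‖ ≤ _
        have hn : ‖x (t n) - z₀‖ ^ 2 ≤ B := hB (mem_range_self n)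
        nlinarith [norm_le_norm_sub_add (x (t n)) z₀, sq_nonneg (‖x (t n) - z₀‖ - 1)]
    exact ⟨c, hclu _ c (ht.comp hσ.tendsto_atTop) hc, σ, hσ, hc⟩
  choose L hL using hlim
  have hopial : ∀ a (ha : a ∈ S) b (hb : b ∈ S) (s : ℕ → ℝ), Tendsto s atTop atTop →
      WeaklyTendsto (x ∘ s) a → L b hb = L a ha + ‖a - b‖ ^ 2 :=
    fun a ha b hb s hs hw ↦
      tendsto_nhds_unique ((hL b hb).comp hs) (hw.tendsto_sq_norm_sub ((hL a ha).comp hs) b)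
  obtain ⟨c, hc, σ, hσ, hxc⟩ := hcluster _ tendsto_natCast_atTop_atTop
  refine ⟨c, hc, fun y ↦ ?_⟩
  by_contra hnot
  obtain ⟨U, hU, hfreq⟩ := not_tendsto_iff_exists_frequently_notMem.1 hnot
  choose t ht hxt using fun n : ℕ ↦ frequently_atTop.1 hfreq n
  have htop : Tendsto t atTop atTop := tendsto_atTop_mono ht tendsto_natCast_atTop_atTop
  obtain ⟨c', hc', σ', hσ', hxc'⟩ := hcluster t htop
  have hne : c' ≠ c := by
    rintro rfl
    obtain ⟨n, hn⟩ := ((hxc' y).eventually hU).exists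
    exact hxt (σ' n) hn
  have h₁ := hopial c hc c' hc' _ (tendsto_natCast_atTop_atTop.comp hσ.tendsto_atTop) hxc
  have h₂ := hopial c' hc' c hc _ (htop.comp hσ'.tendsto_atTop) hxc'
  rw [norm_sub_rev] at h₂
  have : ‖c - c'‖ ^ 2 = 0 := by linarith
  exact hne (sub_eq_zero.1 (norm_eq_zero.1 (pow_eq_zero_iff two_ne_zero |>.1 this))).symm

theorem mem_of_weaklyTendsto_comp {x : ℝ → E} {C : ℝ → Set E} {S : Set E}
    (hx : ContinuousOn x (Ici 0)) (hmem : ∀ᵐ t ∂volume.restrict (Ioi 0), x t ∈ C t)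
    (hS : ∀ (tn : ℕ → ℝ) (cn : ℕ → E) (c : E), Tendsto tn atTop atTop →
      (∀ n, cn n ∈ C (tn n)) → WeaklyTendsto cn c → c ∈ S)
    {t : ℕ → ℝ} {c : E} (ht : Tendsto t atTop atTop) (hc : WeaklyTendsto (x ∘ t) c) : c ∈ S := by
  -- `x t ∈ C t` only holds a.e., so each `t n` is moved to a nearby time where it does.
  have hnear : ∀ n : ℕ, ∃ s, max (t n) 0 ≤ s ∧ x s ∈ C s ∧
      dist (x s) (x (max (t n) 0)) < 1 / (n + 1) := fun n ↦
    exists_ge_mem_dist_lt_of_ae_mem hmem (le_max_right _ _) (hx _ (le_max_right (t n) 0))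
      Nat.one_div_pos_of_nat
  choose s hts hsC hsx using hnear
  refine hS s (x ∘ s) c (tendsto_atTop_mono (fun n ↦ (le_max_left _ _).trans (hts n)) ht) hsC ?_
  refine WeaklyTendsto.of_tendsto_dist (u := fun n ↦ x (max (t n) 0)) (fun y ↦ (hc y).congr' ?_)
    (squeeze_zero (fun _ ↦ dist_nonneg) (fun n ↦ (hsx n).le)
      tendsto_one_div_add_atTop_nhds_zero_nat)
  filter_upwards [ht.eventually_ge_atTop 0] with n hn
  simp [max_eq_left hn]

end InnerProduct

namespace LocAC

variable {E : Type*} [NormedAddCommGroup E] [InnerProductSpace ℝ E] {x x' : ℝ → E}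

theorem intervalIntegrable (hx : LocAC x x') {a b : ℝ} (ha : 0 ≤ a) (hb : 0 ≤ b) :
    IntervalIntegrable x' volume a b :=
  ((hx.1 (max a b)).mono_set fun _ hr ↦ ⟨(le_min ha hb).trans hr.1, hr.2⟩).intervalIntegrable

theorem sub_eq_integral (hx : LocAC x x') {a b : ℝ} (ha : 0 ≤ a) (hb : 0 ≤ b) :
    x b - x a = ∫ r in a..b, x' r := by
  rw [hx.2 b hb, hx.2 a ha, add_sub_add_left_eq_sub, intervalIntegral.integral_interval_sub_left
    (hx.intervalIntegrable le_rfl hb) (hx.intervalIntegrable le_rfl ha)]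

theorem absolutelyContinuousOnInterval (hx : LocAC x x') {a b : ℝ} (ha : 0 ≤ a) (hb : 0 ≤ b) :
    AbsolutelyContinuousOnInterval x a b := by
  refine ((hx.intervalIntegrable ha hb).norm.absolutelyContinuousOnInterval_intervalIntegral
    left_mem_uIcc).of_dist_le_mul (K := 1) fun u hu v hv ↦ ?_
  have hu0 : 0 ≤ u := le_trans (le_min ha hb) hu.1
  have hv0 : 0 ≤ v := le_trans (le_min ha hb) hv.1
  rw [one_mul, dist_eq_norm, dist_eq_norm, Real.norm_eq_abs, hx.sub_eq_integral hv0 hu0,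
    intervalIntegral.integral_interval_sub_left (hx.intervalIntegrable ha hu0).norm
      (hx.intervalIntegrable ha hv0).norm]
  exact intervalIntegral.norm_integral_le_abs_integral_norm

theorem continuousOn (hx : LocAC x x') : ContinuousOn x (Ici 0) := by
  intro t ht
  have ht1 : (0:ℝ) ≤ t + 1 := by linarith [mem_Ici.1 ht]
  have hcont := (hx.absolutelyContinuousOnInterval le_rfl ht1).continuousOn
  rw [uIcc_of_le ht1] at hcont
  exact (hcont t ⟨ht, by linarith⟩).mono_of_mem_nhdsWithin
    (inter_mem_nhdsWithin _ (Iic_mem_nhds (by linarith)))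

theorem ae_hasDerivAt [CompleteSpace E] (hx : LocAC x x') :
    ∀ᵐ t, 0 < t → HasDerivAt x (x' t) t := by
  have h : ∀ n : ℕ, ∀ᵐ t, t ∈ uIcc 0 (n : ℝ) → ∀ c ∈ uIcc 0 (n : ℝ),
      HasDerivAt (fun u ↦ ∫ r in c..u, x' r) (x' t) t :=
    fun n ↦ (hx.intervalIntegrable le_rfl n.cast_nonneg).ae_hasDerivAt_integral
  filter_upwards [ae_all_iff.2 h] with t ht ht0
  obtain ⟨n, hn⟩ := exists_nat_gt t
  have htn : t ∈ uIcc 0 (n : ℝ) := by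
    rw [uIcc_of_le n.cast_nonneg]
    exact ⟨ht0.le, hn.le⟩
  refine ((ht n htn 0 left_mem_uIcc).const_add (x 0)).congr_of_eventuallyEq ?_
  filter_upwards [Ioi_mem_nhds ht0] with u hu using hx.2 u (le_of_lt hu)

theorem aestronglyMeasurable (hx : LocAC x x') :
    AEStronglyMeasurable x' (volume.restrict (Ici 0)) := by
  have hcover : Ici (0 : ℝ) = ⋃ n : ℕ, Icc 0 (n : ℝ) := by
    ext r
    simpa using fun _ ↦ exists_nat_ge r
  rw [hcover, aestronglyMeasurable_iUnion_iff]
  exact fun n ↦ (hx.1 n).aestronglyMeasurable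

theorem absolutelyContinuousOnInterval_sq_norm_sub (hx : LocAC x x') (z : E) {a b : ℝ}
    (ha : 0 ≤ a) (hb : 0 ≤ b) :
    AbsolutelyContinuousOnInterval (fun r ↦ ‖x r - z‖ ^ 2) a b := by
  have hAC := hx.absolutelyContinuousOnInterval ha hb
  obtain ⟨B, hB⟩ := hAC.exists_bound
  refine hAC.of_dist_le_mul (K := 2 * (B + ‖z‖)) fun u hu v hv ↦ ?_
  have hbound : ∀ r ∈ uIcc a b, ‖x r - z‖ ≤ B + ‖z‖ :=
    fun r hr ↦ (norm_sub_le _ _).trans (by linarith [hB r hr])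
  rw [Real.dist_eq, sq_sub_sq, abs_mul, abs_of_nonneg (by positivity), dist_eq_norm,
    ← sub_sub_sub_cancel_right (x u) (x v) z]
  exact mul_le_mul (by linarith [hbound u hu, hbound v hv]) (abs_norm_sub_norm_le _ _)
    (abs_nonneg _) (by linarith [norm_nonneg (x u - z), hbound u hu])

theorem sq_norm_sub_sub_sq_norm_sub_eq_integral [CompleteSpace E] (hx : LocAC x x') (z : E)
    {s t : ℝ} (hs : 0 ≤ s) (ht : 0 ≤ t) :
    ‖x t - z‖ ^ 2 - ‖x s - z‖ ^ 2 = ∫ r in s..t, 2 * ⟪x r - z, x' r⟫ := by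
  rw [← (hx.absolutelyContinuousOnInterval_sq_norm_sub z hs ht).integral_deriv_eq_sub]
  refine intervalIntegral.integral_congr_ae ?_
  filter_upwards [hx.ae_hasDerivAt] with r hr hrI
  exact ((hr (lt_of_le_of_lt (le_min hs ht) hrI.1)).sub_const z).norm_sq.deriv

theorem sq_norm_sub_le_add_lintegral [CompleteSpace E] (hx : LocAC x x') (z : E) {s t : ℝ}
    (hs : 0 ≤ s) (hst : s ≤ t)
    (hfin : ∫⁻ r in Ici s, ENNReal.ofReal (2 * ⟪x r - z, x' r⟫) ≠ ∞) :
    ‖x t - z‖ ^ 2 ≤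
      ‖x s - z‖ ^ 2 + (∫⁻ r in Ici s, ENNReal.ofReal (2 * ⟪x r - z, x' r⟫)).toReal := by
  have hid := hx.sq_norm_sub_sub_sq_norm_sub_eq_integral z hs (hs.trans hst)
  rw [intervalIntegral.integral_of_le hst] at hid
  have hIoc := integral_le_toReal_lintegral_ofReal (μ := volume.restrict (Ioc s t))
    fun r ↦ 2 * ⟪x r - z, x' r⟫
  have hsub : Ioc s t ⊆ Ici s := Ioc_subset_Ioi_self.trans Ioi_subset_Ici_self
  have hIci := ENNReal.toReal_mono hfin (lintegral_mono_set (μ := volume)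
    (f := fun r ↦ ENNReal.ofReal (2 * ⟪x r - z, x' r⟫)) hsub)
  linarith

theorem exists_tendsto_sq_norm_sub [CompleteSpace E] (hx : LocAC x x') (z : E)
    (hfin : ∫⁻ r in Ici 0, ENNReal.ofReal (2 * ⟪x r - z, x' r⟫) ≠ ∞) :
    ∃ L, Tendsto (fun t ↦ ‖x t - z‖ ^ 2) atTop (𝓝 L) := by
  have htail := (ENNReal.tendsto_toReal zero_ne_top).comp (tendsto_lintegral_Ici_atTop_zero hfin)
  rw [toReal_zero] at htail
  exact exists_tendsto_of_le_add (fun _ ↦ sq_nonneg _) htail fun s t hs hst ↦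
    hx.sq_norm_sub_le_add_lintegral z hs hst
      (ne_top_of_le_ne_top hfin (lintegral_mono_set (Ici_subset_Ici.2 hs)))

theorem lintegral_ofReal_inner_ne_top {ζ : ℝ → E} {C : ℝ → Set E} {z : E} (hx : LocAC x x')
    (hsol : ∀ᵐ t ∂volume.restrict (Ioi 0), ∀ y ∈ C t, ⟪-x' t, y - x t⟫ ≤ 0)
    (hζ : ∀ t, 0 ≤ t → ζ t ∈ C t) (hζz : ∫⁻ t in Ici 0, ENNReal.ofReal (‖ζ t - z‖ ^ 2) < ⊤)
    (henergy : ∫⁻ t in Ici 0, ENNReal.ofReal (‖x' t‖ ^ 2) < ⊤) :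
    ∫⁻ t in Ici 0, ENNReal.ofReal (2 * ⟪x t - z, x' t⟫) ≠ ∞ := by
  have hle : ∀ᵐ t ∂volume.restrict (Ici 0), ENNReal.ofReal (2 * ⟪x t - z, x' t⟫) ≤
      ENNReal.ofReal (‖x' t‖ ^ 2) + ENNReal.ofReal (‖ζ t - z‖ ^ 2) := by
    rw [← restrict_Ioi_eq_restrict_Ici]
    filter_upwards [hsol, ae_restrict_mem measurableSet_Ioi] with t hN ht
    exact (ENNReal.ofReal_le_ofReal (two_inner_sub_le_of_inner_neg_le (hN _ (hζ t ht.le)))).trans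
      ENNReal.ofReal_add_le
  refine ne_top_of_le_ne_top ?_ (lintegral_mono_ae hle)
  rw [lintegral_add_left' (hx.aestronglyMeasurable.norm.aemeasurable.pow_const 2).ennreal_ofReal]
  exact add_ne_top.2 ⟨henergy.ne, hζz.ne⟩

end LocAC

theorem sweeping_process_convergence_general
    (C : ℝ → Set H) (Cinf : Set H)
    (hCinf : Cinf.Nonempty ∧ IsClosed Cinf ∧ Convex ℝ Cinf)
    -- Mosco convergence, part (a): weak sequential upper limit
    (mosco_a : ∀ (tn : ℕ → ℝ) (cn : ℕ → H) (c : H), Tendsto tn atTop atTop →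
      (∀ n : ℕ, cn n ∈ C (tn n)) →
      (∀ y : H, Tendsto (fun n : ℕ => (⟪cn n, y⟫ : ℝ)) atTop (𝓝 (⟪c, y⟫ : ℝ))) →
      c ∈ Cinf)
    -- square-summable selections
    (hsel : ∀ z ∈ Cinf, ∃ ζ : ℝ → H, (∀ t : ℝ, 0 ≤ t → ζ t ∈ C t) ∧
      Tendsto ζ atTop (𝓝 z) ∧
      ∫⁻ t in Ici (0:ℝ), ENNReal.ofReal (‖ζ t - z‖ ^ 2) < ⊤)
    (x x' : ℝ → H) (hx : LocAC x x')
    (hsol : ∀ᵐ t ∂(volume.restrict (Ioi (0:ℝ))),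
      x t ∈ C t ∧ ∀ y ∈ C t, (⟪-x' t, y - x t⟫ : ℝ) ≤ 0)
    (henergy : ∫⁻ t in Ici (0:ℝ), ENNReal.ofReal (‖x' t‖ ^ 2) < ⊤) :
    ∃ xlim ∈ Cinf, WeakConv x xlim := by
  have hlim : ∀ z ∈ Cinf, ∃ L, Tendsto (fun t ↦ ‖x t - z‖ ^ 2) atTop (𝓝 L) := by
    intro z hz
    obtain ⟨ζ, hζC, -, hζz⟩ := hsel z hz
    exact hx.exists_tendsto_sq_norm_sub z
      (hx.lintegral_ofReal_inner_ne_top (hsol.mono fun _ h ↦ h.2) hζC hζz henergy)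
  exact exists_weakConv_of_tendsto_sq_norm_sub hCinf.1 hlim fun t c ht hc ↦
    mem_of_weaklyTendsto_comp hx.continuousOn (hsol.mono fun _ h ↦ h.1) mosco_a ht hc

/-- sweeping process `ẋ(t) + N_{C(t)}(x(t)) ∋ 0` with `C(t)` Mosco converging
to `C∞`, a square-summable selection condition, and finite energy: the trajectory
converges weakly to a point of `C∞`. -/
theorem sweeping_process_convergence
    (C : ℝ → Set H) (Cinf : Set H)
    (hC : ∀ t : ℝ, 0 ≤ t → (C t).Nonempty ∧ IsClosed (C t) ∧ Convex ℝ (C t))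
    (hCinf : Cinf.Nonempty ∧ IsClosed Cinf ∧ Convex ℝ Cinf)
    -- Mosco convergence, part (a): weak sequential upper limit
    (mosco_a : ∀ (tn : ℕ → ℝ) (cn : ℕ → H) (c : H), Tendsto tn atTop atTop →
      (∀ n : ℕ, cn n ∈ C (tn n)) →
      (∀ y : H, Tendsto (fun n : ℕ => (⟪cn n, y⟫ : ℝ)) atTop (𝓝 (⟪c, y⟫ : ℝ))) →
      c ∈ Cinf)
    -- Mosco convergence, part (b): strong approximation of points of `C∞`
    (mosco_b : ∀ z ∈ Cinf, ∃ ζ : ℝ → H, (∀ t : ℝ, 0 ≤ t → ζ t ∈ C t) ∧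
      Tendsto ζ atTop (𝓝 z))
    -- square-summable selections
    (hsel : ∀ z ∈ Cinf, ∃ ζ : ℝ → H, (∀ t : ℝ, 0 ≤ t → ζ t ∈ C t) ∧
      Tendsto ζ atTop (𝓝 z) ∧
      ∫⁻ t in Ici (0:ℝ), ENNReal.ofReal (‖ζ t - z‖ ^ 2) < ⊤)
    (x x' : ℝ → H) (hx : LocAC x x')
    (hsol : ∀ᵐ t ∂(volume.restrict (Ioi (0:ℝ))),
      x t ∈ C t ∧ ∀ y ∈ C t, (⟪-x' t, y - x t⟫ : ℝ) ≤ 0)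
    (henergy : ∫⁻ t in Ici (0:ℝ), ENNReal.ofReal (‖x' t‖ ^ 2) < ⊤) :
    ∃ xlim ∈ Cinf, WeakConv x xlim :=
  sweeping_process_convergence_general C Cinf hCinf mosco_a hsel x x' hx hsol henergy
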